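/- Let μ be a continuous probability measure with supp(μ) ⊆ [a,b], −∞ < a < b < ∞, and let T be the mean-split quantization algorithm (split function f(μ) = mean of μ). Then for every n ≥ 0, W₁(μ, T(μ,n)) ≤ (b−a)/2^{n+1}. -/

import Mathlib

open MeasureTheory
open scoped ENNReal NNReal

/-- The Wasserstein-1 distance between two Borel measures on `ℝ`,
defined as the infimum over all couplings `γ` of the transport cost. -/
noncomputable def W1 (μ ν : Measure ℝ) : ENNReal :=
  ⨅ (γ : Measure (ℝ × ℝ)) (_ : γ.map Prod.fst = μ ∧ γ.map Prod.snd = ν),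
    ∫⁻ p, edist p.1 p.2 ∂γ

/-- The conditional (normalized restricted) measure of `μ` on `s`. -/
noncomputable def condOn (μ : Measure ℝ) (s : Set ℝ) : Measure ℝ :=
  (μ s)⁻¹ • μ.restrict s

open Classical in
/-- The divide-and-conquer quantization algorithm driven by a split function `f`. -/
noncomputable def T (f : Measure ℝ → ℝ) : ℕ → Measure ℝ → Measure ℝ
  | 0, μ => Measure.dirac (f μ)
  | n + 1, μ =>
    if μ {x | x ≤ f μ} = 0 ∨ μ {x | f μ < x} = 0 then Measure.dirac (f μ)
    else
      μ {x | x ≤ f μ} • T f n (condOn μ {x | x ≤ f μ}) +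
        μ {x | f μ < x} • T f n (condOn μ {x | f μ < x})

/-!
Induct on the stronger bound `W₁(μ, T(μ, n)) ≤ √((b - m)(m - a)) / 2ⁿ`, where `m` is the mean
of `μ`. For `n = 0` it is the mean absolute deviation bound
`E|X - m| ≤ √(Var X) ≤ √((b - m)(m - a))` (Bhatia–Davis). For the step, `W₁` is subadditive
along `μ = μ(Ω₋) μ₋ + μ(Ω₊) μ₊`, and the means `m₋ ≤ m ≤ m₊` of the halves satisfy
`p (m - m₋) = q (m₊ - m)` for the weights `p, q`; with this common value `c`, Cauchy–Schwarz gives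
`p √((m - m₋)(m₋ - a)) + q √((b - m₊)(m₊ - m)) ≤ √(p (m - a) · q (b - m)) ≤ √((b - m)(m - a)) / 2`.
Finally `√((b - m)(m - a)) ≤ (b - a) / 2` by AM–GM.
-/
open ProbabilityTheory

section Wasserstein

variable {μ ν : Measure ℝ}

lemma W1_le_lintegral_edist (γ : Measure (ℝ × ℝ)) (h₁ : γ.map Prod.fst = μ)
    (h₂ : γ.map Prod.snd = ν) : W1 μ ν ≤ ∫⁻ p, edist p.1 p.2 ∂γ :=
  iInf₂_le γ ⟨h₁, h₂⟩

lemma W1_add_add_le (μ₁ μ₂ ν₁ ν₂ : Measure ℝ) :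
    W1 (μ₁ + μ₂) (ν₁ + ν₂) ≤ W1 μ₁ ν₁ + W1 μ₂ ν₂ := by
  refine ENNReal.le_iInf_add_iInf fun γ₁ γ₂ => ENNReal.le_iInf_add_iInf fun h₁ h₂ => ?_
  refine (W1_le_lintegral_edist (γ₁ + γ₂) ?_ ?_).trans_eq (lintegral_add_measure ..)
  · rw [Measure.map_add _ _ measurable_fst, h₁.1, h₂.1]
  · rw [Measure.map_add _ _ measurable_snd, h₁.2, h₂.2]

lemma W1_smul_smul_le (c : ℝ≥0∞) (hc : c ≠ ∞) : W1 (c • μ) (c • ν) ≤ c * W1 μ ν := by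
  rcases eq_or_ne c 0 with rfl | hc₀
  · simpa using W1_le_lintegral_edist (μ := 0) (ν := 0) 0 (by simp) (by simp)
  conv_rhs => rw [W1, ENNReal.mul_iInf_of_ne hc₀ hc]
  refine le_iInf fun γ => ?_
  rw [ENNReal.mul_iInf_of_ne hc₀ hc]
  refine le_iInf fun h => ?_
  refine (W1_le_lintegral_edist (c • γ) ?_ ?_).trans_eq (lintegral_smul_measure ..)
  · rw [Measure.map_smul, h.1]
  · rw [Measure.map_smul, h.2]

lemma W1_dirac_le_lintegral_edist [IsProbabilityMeasure μ] (m : ℝ) :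
    W1 μ (Measure.dirac m) ≤ ∫⁻ x, edist x m ∂μ := by
  have hγ : Measurable fun x : ℝ => (x, m) := measurable_id.prodMk measurable_const
  refine (W1_le_lintegral_edist (μ.map fun x => (x, m)) ?_ ?_).trans_eq
    (lintegral_map (measurable_fst.edist measurable_snd) hγ)
  · rw [Measure.map_map measurable_fst hγ]
    exact Measure.map_id
  · rw [Measure.map_map measurable_snd hγ]
    simp [Function.comp_def]

end Wasserstein

section condOn

variable {μ : Measure ℝ} {s : Set ℝ}

lemma isProbabilityMeasure_condOn [IsFiniteMeasure μ] (hs : μ s ≠ 0) :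
    IsProbabilityMeasure (condOn μ s) :=
  ⟨by rw [condOn, Measure.smul_apply, Measure.restrict_apply_univ, smul_eq_mul,
    ENNReal.inv_mul_cancel hs (measure_ne_top _ _)]⟩

lemma smul_condOn [IsFiniteMeasure μ] (s : Set ℝ) : μ s • condOn μ s = μ.restrict s := by
  rcases eq_or_ne (μ s) 0 with hs | hs
  · rw [hs, zero_smul, eq_comm, Measure.restrict_eq_zero, hs]
  · rw [condOn, smul_smul, ENNReal.mul_inv_cancel hs (measure_ne_top _ _), one_smul]

lemma measureReal_mul_integral_condOn [IsFiniteMeasure μ] (s : Set ℝ) (f : ℝ → ℝ) :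
    μ.real s * ∫ x, f x ∂condOn μ s = ∫ x in s, f x ∂μ := by
  rw [measureReal_def, ← smul_eq_mul, ← integral_smul_measure, smul_condOn]

lemma ae_condOn {p : ℝ → Prop} (hs : MeasurableSet s) (h : ∀ᵐ x ∂μ, x ∈ s → p x) :
    ∀ᵐ x ∂condOn μ s, p x :=
  Measure.ae_smul_measure ((ae_restrict_iff' hs).2 h) _

lemma W1_smul_add_smul_le_condOn [IsFiniteMeasure μ] (hs : MeasurableSet s) (ν₁ ν₂ : Measure ℝ) :
    W1 μ (μ s • ν₁ + μ sᶜ • ν₂) ≤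
      μ s * W1 (condOn μ s) ν₁ + μ sᶜ * W1 (condOn μ sᶜ) ν₂ := by
  have hμ : μ s • condOn μ s + μ sᶜ • condOn μ sᶜ = μ := by
    rw [smul_condOn, smul_condOn, Measure.restrict_add_restrict_compl hs]
  calc W1 μ (μ s • ν₁ + μ sᶜ • ν₂)
      = W1 (μ s • condOn μ s + μ sᶜ • condOn μ sᶜ) (μ s • ν₁ + μ sᶜ • ν₂) := by rw [hμ]
    _ ≤ W1 (μ s • condOn μ s) (μ s • ν₁) + W1 (μ sᶜ • condOn μ sᶜ) (μ sᶜ • ν₂) :=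
        W1_add_add_le ..
    _ ≤ _ := add_le_add (W1_smul_smul_le _ (measure_ne_top _ _))
        (W1_smul_smul_le _ (measure_ne_top _ _))

end condOn

section MeanAbsoluteDeviation

variable {Ω : Type*} [MeasurableSpace Ω] {μ : Measure Ω} [IsProbabilityMeasure μ] {X : Ω → ℝ}

lemma sq_integral_abs_sub_le_variance (hX : MemLp X 2 μ) :
    (∫ ω, |X ω - μ[X]| ∂μ) ^ 2 ≤ Var[X; μ] := by
  have hY : MemLp (fun ω => |X ω - μ[X]|) 2 μ := (hX.sub (memLp_const _)).abs
  have := variance_nonneg (fun ω => |X ω - μ[X]|) μ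
  rw [variance_eq_sub hY] at this
  rw [variance_eq_integral hX.aestronglyMeasurable.aemeasurable]
  simpa [sq_abs] using this

lemma integral_abs_sub_le_sqrt {a b : ℝ} (hX : ∀ᵐ ω ∂μ, X ω ∈ Set.Icc a b)
    (hXm : AEMeasurable X μ) :
    ∫ ω, |X ω - μ[X]| ∂μ ≤ √((b - μ[X]) * (μ[X] - a)) :=
  (le_abs_self _).trans <| Real.abs_le_sqrt <|
    (sq_integral_abs_sub_le_variance (memLp_of_bounded hX hXm.aestronglyMeasurable 2)).trans
      (variance_le_sub_mul_sub hX hXm)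

end MeanAbsoluteDeviation

lemma sqrt_mul_add_sqrt_mul_le {c x y : ℝ} (hc : 0 ≤ c) (hx : 0 ≤ x) (hy : 0 ≤ y) :
    √(c * x) + √(c * y) ≤ √((c + x) * (c + y)) := by
  rw [Real.sqrt_mul hc, Real.sqrt_mul hc, Real.le_sqrt (by positivity) (by positivity)]
  nlinarith [Real.sq_sqrt hc, Real.sq_sqrt hx, Real.sq_sqrt hy,
    sq_nonneg (√c * √c - √x * √y)]

lemma sqrt_mean_split_le {a b m m₁ m₂ p q : ℝ} (ha : a ≤ m₁) (h₁ : m₁ ≤ m) (h₂ : m ≤ m₂)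
    (hb : m₂ ≤ b) (hp : 0 ≤ p) (hq : 0 ≤ q) (hpq : p + q = 1) (hm : p * m₁ + q * m₂ = m) :
    p * √((m - m₁) * (m₁ - a)) + q * √((b - m₂) * (m₂ - m)) ≤ √((b - m) * (m - a)) / 2 := by
  obtain ⟨c, hc₁⟩ : ∃ c, p * (m - m₁) = c := ⟨_, rfl⟩
  have hc₂ : q * (m₂ - m) = c := by linear_combination hm - m * hpq + hc₁
  have hpush : ∀ {r : ℝ} (x : ℝ), 0 ≤ r → r * √x = √(r ^ 2 * x) := fun x hr => by
    rw [Real.sqrt_mul (sq_nonneg _), Real.sqrt_sq hr]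
  have e₁ : p * √((m - m₁) * (m₁ - a)) = √(c * (p * (m₁ - a))) := by
    rw [hpush _ hp, ← hc₁]; ring_nf
  have e₂ : q * √((b - m₂) * (m₂ - m)) = √(c * (q * (b - m₂))) := by
    rw [hpush _ hq, ← hc₂]; ring_nf
  calc p * √((m - m₁) * (m₁ - a)) + q * √((b - m₂) * (m₂ - m))
      = √(c * (p * (m₁ - a))) + √(c * (q * (b - m₂))) := by rw [e₁, e₂]
    _ ≤ √((c + p * (m₁ - a)) * (c + q * (b - m₂))) :=
        sqrt_mul_add_sqrt_mul_le (hc₁ ▸ mul_nonneg hp (by linarith))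
          (mul_nonneg hp (by linarith)) (mul_nonneg hq (by linarith))
    _ = √(p * q * ((b - m) * (m - a))) := by
        congr 1; linear_combination -(c + q * (b - m₂)) * hc₁ - p * (m - a) * hc₂
    _ ≤ √((1 / 2) ^ 2 * ((b - m) * (m - a))) := by
        gcongr
        · exact mul_nonneg (by linarith) (by linarith)
        · nlinarith [sq_nonneg (p - q)]
    _ = √((b - m) * (m - a)) / 2 := by
        rw [← hpush _ (by norm_num)]; ring

section Support

variable {μ : Measure ℝ} {a b : ℝ}

lemma integrable_id_of_ae_mem_Icc [IsFiniteMeasure μ] (hμ : ∀ᵐ x ∂μ, x ∈ Set.Icc a b) :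
    Integrable (fun x => x) μ :=
  (memLp_of_bounded hμ aestronglyMeasurable_id 1).integrable le_rfl

lemma integral_id_mem_Icc [IsProbabilityMeasure μ] (hμ : ∀ᵐ x ∂μ, x ∈ Set.Icc a b) :
    ∫ x, x ∂μ ∈ Set.Icc a b :=
  (convex_Icc a b).integral_mem isClosed_Icc hμ (integrable_id_of_ae_mem_Icc hμ)

lemma W1_dirac_integral_le [IsProbabilityMeasure μ] (hμ : ∀ᵐ x ∂μ, x ∈ Set.Icc a b) :
    W1 μ (Measure.dirac (∫ x, x ∂μ)) ≤
      ENNReal.ofReal √((b - ∫ x, x ∂μ) * ((∫ x, x ∂μ) - a)) := by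
  have hint : Integrable (fun x => |x - ∫ x, x ∂μ|) μ :=
    ((integrable_id_of_ae_mem_Icc hμ).sub (integrable_const _)).abs
  refine (W1_dirac_le_lintegral_edist _).trans ?_
  simp_rw [edist_dist, Real.dist_eq]
  rw [← ofReal_integral_eq_lintegral_ofReal hint (ae_of_all _ fun _ => abs_nonneg _)]
  exact ENNReal.ofReal_le_ofReal (integral_abs_sub_le_sqrt (X := id) hμ aemeasurable_id)

lemma ae_condOn_le_mem_Icc (hμ : ∀ᵐ x ∂μ, x ∈ Set.Icc a b) (c : ℝ) :
    ∀ᵐ x ∂condOn μ {x | x ≤ c}, x ∈ Set.Icc a c :=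
  ae_condOn measurableSet_Iic (hμ.mono fun _ hx hxc => ⟨hx.1, hxc⟩)

lemma ae_condOn_compl_le_mem_Icc (hμ : ∀ᵐ x ∂μ, x ∈ Set.Icc a b) (c : ℝ) :
    ∀ᵐ x ∂condOn μ {x | x ≤ c}ᶜ, x ∈ Set.Icc c b :=
  ae_condOn measurableSet_Iic.compl
    (hμ.mono fun _ hx (hxc : ¬_ ≤ c) => ⟨(not_le.1 hxc).le, hx.2⟩)

lemma W1_dirac_integral_eq_zero [IsProbabilityMeasure μ] (hμ : ∀ᵐ x ∂μ, x ∈ Set.Icc a b)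
    (h : μ {x | ∫ x, x ∂μ < x} = 0) : W1 μ (Measure.dirac (∫ x, x ∂μ)) = 0 := by
  have hμ' : ∀ᵐ x ∂μ, x ∈ Set.Icc a (∫ x, x ∂μ) := by
    filter_upwards [hμ, measure_eq_zero_iff_ae_notMem.1 h] with x hx hxm
    exact ⟨hx.1, not_lt.1 hxm⟩
  simpa using W1_dirac_integral_le hμ'

end Support

section Recursion

variable (f : Measure ℝ → ℝ) (n : ℕ) (μ : Measure ℝ)

lemma T_succ_of_measure_gt_eq_zero (h : μ {x | f μ < x} = 0) :
    T f (n + 1) μ = Measure.dirac (f μ) := by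
  rw [T, if_pos (Or.inr h)]

lemma T_succ_of_ne_zero (h₁ : μ {x | x ≤ f μ} ≠ 0) (h₂ : μ {x | f μ < x} ≠ 0) :
    T f (n + 1) μ = μ {x | x ≤ f μ} • T f n (condOn μ {x | x ≤ f μ}) +
      μ {x | x ≤ f μ}ᶜ • T f n (condOn μ {x | x ≤ f μ}ᶜ) := by
  simp only [T, if_neg (not_or.2 ⟨h₁, h₂⟩), Set.compl_ofPred, not_le]

end Recursion

lemma mul_ofReal_add_mul_ofReal {u v : ℝ≥0∞} (hu : u ≠ ∞) (hv : v ≠ ∞) {x y : ℝ}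
    (hx : 0 ≤ x) (hy : 0 ≤ y) :
    u * ENNReal.ofReal x + v * ENNReal.ofReal y =
      ENNReal.ofReal (u.toReal * x + v.toReal * y) := by
  rw [ENNReal.ofReal_add (by positivity) (by positivity), ENNReal.ofReal_mul ENNReal.toReal_nonneg,
    ENNReal.ofReal_mul ENNReal.toReal_nonneg, ENNReal.ofReal_toReal hu, ENNReal.ofReal_toReal hv]

lemma W1_T_integral_succ_le {n : ℕ}
    (ih : ∀ (μ : Measure ℝ) [IsProbabilityMeasure μ] {a b : ℝ}, (∀ᵐ x ∂μ, x ∈ Set.Icc a b) →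
      W1 μ (T (fun ν => ∫ t, t ∂ν) n μ) ≤
        ENNReal.ofReal (√((b - ∫ x, x ∂μ) * ((∫ x, x ∂μ) - a)) / 2 ^ n))
    (μ : Measure ℝ) [IsProbabilityMeasure μ] {a b : ℝ} (hμ : ∀ᵐ x ∂μ, x ∈ Set.Icc a b) :
    W1 μ (T (fun ν => ∫ t, t ∂ν) (n + 1) μ) ≤
      ENNReal.ofReal (√((b - ∫ x, x ∂μ) * ((∫ x, x ∂μ) - a)) / 2 ^ (n + 1)) := by
  set m := ∫ x, x ∂μ
  have hint := integrable_id_of_ae_mem_Icc hμ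
  by_cases hhi : μ {x | m < x} = 0
  · rw [T_succ_of_measure_gt_eq_zero _ _ _ hhi, W1_dirac_integral_eq_zero hμ hhi]
    exact zero_le
  set s := {x : ℝ | x ≤ m}
  have hs : MeasurableSet s := measurableSet_Iic
  have hlo : μ s ≠ 0 := (measure_le_integral_pos hint).ne'
  have hhi' : μ sᶜ ≠ 0 := by simpa [s, Set.compl_ofPred, not_le] using hhi
  rw [T_succ_of_ne_zero _ _ _ hlo hhi]
  have := isProbabilityMeasure_condOn hlo
  have := isProbabilityMeasure_condOn hhi'
  have hμ₁ := ae_condOn_le_mem_Icc hμ m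
  have hμ₂ := ae_condOn_compl_le_mem_Icc hμ m
  set m₁ := ∫ x, x ∂condOn μ s
  set m₂ := ∫ x, x ∂condOn μ sᶜ
  obtain ⟨ham₁, hm₁m⟩ := integral_id_mem_Icc hμ₁
  obtain ⟨hmm₂, hm₂b⟩ := integral_id_mem_Icc hμ₂
  have hmean : μ.real s * m₁ + μ.real sᶜ * m₂ = m := by
    rw [measureReal_mul_integral_condOn, measureReal_mul_integral_condOn,
      integral_add_compl hs hint]
  calc W1 μ (μ s • T _ n (condOn μ s) + μ sᶜ • T _ n (condOn μ sᶜ))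
      ≤ μ s * W1 (condOn μ s) (T _ n (condOn μ s)) +
          μ sᶜ * W1 (condOn μ sᶜ) (T _ n (condOn μ sᶜ)) := W1_smul_add_smul_le_condOn hs ..
    _ ≤ μ s * ENNReal.ofReal (√((m - m₁) * (m₁ - a)) / 2 ^ n) +
          μ sᶜ * ENNReal.ofReal (√((b - m₂) * (m₂ - m)) / 2 ^ n) := by
        gcongr
        exacts [ih _ hμ₁, ih _ hμ₂]
    _ = ENNReal.ofReal ((μ.real s * √((m - m₁) * (m₁ - a)) +
          μ.real sᶜ * √((b - m₂) * (m₂ - m))) / 2 ^ n) := by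
        rw [mul_ofReal_add_mul_ofReal (measure_ne_top _ _) (measure_ne_top _ _) (by positivity)
          (by positivity), add_div, mul_div_assoc, mul_div_assoc, measureReal_def,
          measureReal_def]
    _ ≤ ENNReal.ofReal (√((b - m) * (m - a)) / 2 / 2 ^ n) := by
        gcongr
        exact sqrt_mean_split_le ham₁ hm₁m hmm₂ hm₂b measureReal_nonneg measureReal_nonneg
          (probReal_add_probReal_compl hs) hmean
    _ = ENNReal.ofReal (√((b - m) * (m - a)) / 2 ^ (n + 1)) := by rw [div_div, pow_succ']

theorem W1_T_integral_le_sqrt (n : ℕ) (μ : Measure ℝ) [IsProbabilityMeasure μ] {a b : ℝ}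
    (hμ : ∀ᵐ x ∂μ, x ∈ Set.Icc a b) :
    W1 μ (T (fun ν => ∫ t, t ∂ν) n μ) ≤
      ENNReal.ofReal (√((b - ∫ x, x ∂μ) * ((∫ x, x ∂μ) - a)) / 2 ^ n) := by
  induction n generalizing μ a b with
  | zero => simpa [T] using W1_dirac_integral_le hμ
  | succ n ih => exact W1_T_integral_succ_le ih μ hμ

theorem W1_meanSplit_le_general (μ : Measure ℝ) [IsProbabilityMeasure μ]
    (a b : ℝ) (hsupp : μ (Set.Icc a b)ᶜ = 0) (n : ℕ) :
    W1 μ (T (fun ν => ∫ t, t ∂ν) n μ) ≤ ENNReal.ofReal ((b - a) / 2 ^ (n + 1)) := by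
  have hμ : ∀ᵐ x ∂μ, x ∈ Set.Icc a b := mem_ae_iff.2 hsupp
  obtain ⟨ham, hmb⟩ := integral_id_mem_Icc hμ
  have hamgm : √((b - ∫ x, x ∂μ) * ((∫ x, x ∂μ) - a)) ≤ (b - a) / 2 :=
    Real.sqrt_le_iff.2 ⟨by linarith, by nlinarith [sq_nonneg (b + a - 2 * ∫ x, x ∂μ)]⟩
  refine (W1_T_integral_le_sqrt n μ hμ).trans (ENNReal.ofReal_le_ofReal ?_)
  rw [pow_succ', ← div_div]
  gcongr

theorem W1_meanSplit_le (μ : Measure ℝ) [IsProbabilityMeasure μ] [NullSingletonClass μ]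
    (a b : ℝ) (hab : a < b) (hsupp : μ (Set.Icc a b)ᶜ = 0) (n : ℕ) :
    W1 μ (T (fun ν => ∫ t, t ∂ν) n μ) ≤ ENNReal.ofReal ((b - a) / 2 ^ (n + 1)) :=
  W1_meanSplit_le_general μ a b hsupp n
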